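/- Let φ be an LTL formula in negation normal form, w an infinite word over 2^Ap, and Y ⊆ ν(φ). If FG_w = Y = G_w, then w ⊨ φ if and only if w ⊨ φ[Y]_μ. -/
import Mathlib


/-- LTL formulas in negation normal form over atomic propositions `Ap`. -/
inductive LTL (Ap : Type) : Type
  | tt : LTL Ap
  | ff : LTL Ap
  | atom (a : Ap) : LTL Ap
  | natom (a : Ap) : LTL Ap
  | conj (φ ψ : LTL Ap) : LTL Ap
  | disj (φ ψ : LTL Ap) : LTL Ap
  | next (φ : LTL Ap) : LTL Ap
  | fut (φ : LTL Ap) : LTL Ap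
  | glob (φ : LTL Ap) : LTL Ap
  | untl (φ ψ : LTL Ap) : LTL Ap
  | wUntl (φ ψ : LTL Ap) : LTL Ap
  | strongRel (φ ψ : LTL Ap) : LTL Ap
  | rel (φ ψ : LTL Ap) : LTL Ap

variable {Ap : Type} [DecidableEq Ap]

/-- The suffix `w_i` of an infinite word. -/
def suffix (w : ℕ → Finset Ap) (i : ℕ) : ℕ → Finset Ap := fun k => w (i + k)

/-- Standard LTL satisfaction over infinite words over `2^Ap`. -/
def Sat : (ℕ → Finset Ap) → LTL Ap → Prop
  | _, .tt => True
  | _, .ff => False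
  | w, .atom a => a ∈ w 0
  | w, .natom a => a ∉ w 0
  | w, .conj φ ψ => Sat w φ ∧ Sat w ψ
  | w, .disj φ ψ => Sat w φ ∨ Sat w ψ
  | w, .next φ => Sat (suffix w 1) φ
  | w, .fut φ => ∃ k, Sat (suffix w k) φ
  | w, .glob φ => ∀ k, Sat (suffix w k) φ
  | w, .untl φ ψ => ∃ k, Sat (suffix w k) ψ ∧ ∀ j < k, Sat (suffix w j) φ
  | w, .wUntl φ ψ =>
      (∀ k, Sat (suffix w k) φ) ∨ (∃ k, Sat (suffix w k) ψ ∧ ∀ j < k, Sat (suffix w j) φ)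
  | w, .strongRel φ ψ => ∃ k, Sat (suffix w k) φ ∧ ∀ j ≤ k, Sat (suffix w j) ψ
  | w, .rel φ ψ =>
      (∀ k, Sat (suffix w k) ψ) ∨ (∃ k, Sat (suffix w k) φ ∧ ∀ j ≤ k, Sat (suffix w j) ψ)

/-- The "after" function on a single letter `ν ∈ 2^Ap`. -/
def afLetter : LTL Ap → Finset Ap → LTL Ap
  | .tt, _ => .tt
  | .ff, _ => .ff
  | .atom a, ν => if a ∈ ν then .tt else .ff
  | .natom a, ν => if a ∈ ν then .ff else .tt
  | .conj φ ψ, ν => .conj (afLetter φ ν) (afLetter ψ ν)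
  | .disj φ ψ, ν => .disj (afLetter φ ν) (afLetter ψ ν)
  | .next φ, _ => φ
  | .fut φ, ν => .disj (afLetter φ ν) (.fut φ)
  | .glob φ, ν => .conj (afLetter φ ν) (.glob φ)
  | .untl φ ψ, ν => .disj (afLetter ψ ν) (.conj (afLetter φ ν) (.untl φ ψ))
  | .wUntl φ ψ, ν => .disj (afLetter ψ ν) (.conj (afLetter φ ν) (.wUntl φ ψ))
  | .strongRel φ ψ, ν => .conj (afLetter ψ ν) (.disj (afLetter φ ν) (.strongRel φ ψ))
  | .rel φ ψ, ν => .conj (afLetter ψ ν) (.disj (afLetter φ ν) (.rel φ ψ))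

/-- The "after" function extended to finite words. -/
def af : LTL Ap → List (Finset Ap) → LTL Ap
  | φ, [] => φ
  | φ, ν :: u => af (afLetter φ ν) u

/-- The finite prefix `w_{0i} = w[0]⋯w[i-1]` of an infinite word. -/
def prefixWord (w : ℕ → Finset Ap) (i : ℕ) : List (Finset Ap) :=
  (List.range i).map w

/-- The finite infix `w_{ij} = w[i]⋯w[j-1]` of an infinite word. -/
def infixWord (w : ℕ → Finset Ap) (i j : ℕ) : List (Finset Ap) :=
  (List.range (j - i)).map (fun k => w (i + k))

/-- Evaluation of a formula as a propositional formula, where every maximal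
proper subformula (root not `∧`/`∨`) is treated as a propositional variable
whose truth value is given by the assignment `v`. -/
def propEval (v : LTL Ap → Prop) : LTL Ap → Prop
  | .tt => True
  | .ff => False
  | .conj φ ψ => propEval v φ ∧ propEval v ψ
  | .disj φ ψ => propEval v φ ∨ propEval v ψ
  | φ => v φ

/-- Propositional equivalence `φ ≡_P ψ`. -/
def propEquiv (φ ψ : LTL Ap) : Prop := ∀ v, propEval v φ ↔ propEval v ψ

/-- The set of subformulas of a formula (including itself). -/
def subf : LTL Ap → Set (LTL Ap)
  | .tt => {LTL.tt}
  | .ff => {LTL.ff}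
  | .atom a => {LTL.atom a}
  | .natom a => {LTL.natom a}
  | .conj φ ψ => insert (.conj φ ψ) (subf φ ∪ subf ψ)
  | .disj φ ψ => insert (.disj φ ψ) (subf φ ∪ subf ψ)
  | .next φ => insert (.next φ) (subf φ)
  | .fut φ => insert (.fut φ) (subf φ)
  | .glob φ => insert (.glob φ) (subf φ)
  | .untl φ ψ => insert (.untl φ ψ) (subf φ ∪ subf ψ)
  | .wUntl φ ψ => insert (.wUntl φ ψ) (subf φ ∪ subf ψ)
  | .strongRel φ ψ => insert (.strongRel φ ψ) (subf φ ∪ subf ψ)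
  | .rel φ ψ => insert (.rel φ ψ) (subf φ ∪ subf ψ)

/-- A formula is proper if its root is not a conjunction or a disjunction. -/
def isProper : LTL Ap → Prop
  | .conj _ _ => False
  | .disj _ _ => False
  | _ => True

/-- The set of proper subformulas of `φ`. -/
def properSubf (φ : LTL Ap) : Set (LTL Ap) := {ψ | ψ ∈ subf φ ∧ isProper ψ}

/-- Formulas whose root is a least-fixed-point operator (`F`, `U`, `M`). -/
def isMu : LTL Ap → Prop
  | .fut _ => True
  | .untl _ _ => True
  | .strongRel _ _ => True
  | _ => False

/-- Formulas whose root is a greatest-fixed-point operator (`G`, `W`, `R`). -/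
def isNu : LTL Ap → Prop
  | .glob _ => True
  | .wUntl _ _ => True
  | .rel _ _ => True
  | _ => False

/-- `μ(φ)`: subformulas of `φ` of the form `Fψ`, `ψ₁Uψ₂`, `ψ₁Mψ₂`. -/
def muSet (φ : LTL Ap) : Set (LTL Ap) := {ψ | ψ ∈ subf φ ∧ isMu ψ}

/-- `ν(φ)`: subformulas of `φ` of the form `Gψ`, `ψ₁Wψ₂`, `ψ₁Rψ₂`. -/
def nuSet (φ : LTL Ap) : Set (LTL Ap) := {ψ | ψ ∈ subf φ ∧ isNu ψ}

/-- `GF_w = {ψ ∈ μ(φ) | w ⊨ GFψ}`. -/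
def GFSet (φ : LTL Ap) (w : ℕ → Finset Ap) : Set (LTL Ap) :=
  {ψ | ψ ∈ muSet φ ∧ Sat w (.glob (.fut ψ))}

/-- `F_w = {ψ ∈ μ(φ) | w ⊨ Fψ}`. -/
def FSet (φ : LTL Ap) (w : ℕ → Finset Ap) : Set (LTL Ap) :=
  {ψ | ψ ∈ muSet φ ∧ Sat w (.fut ψ)}

/-- `FG_w = {ψ ∈ ν(φ) | w ⊨ FGψ}`. -/
def FGSet (φ : LTL Ap) (w : ℕ → Finset Ap) : Set (LTL Ap) :=
  {ψ | ψ ∈ nuSet φ ∧ Sat w (.fut (.glob ψ))}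

/-- `G_w = {ψ ∈ ν(φ) | w ⊨ Gψ}`. -/
def GSet (φ : LTL Ap) (w : ℕ → Finset Ap) : Set (LTL Ap) :=
  {ψ | ψ ∈ nuSet φ ∧ Sat w (.glob ψ)}

open scoped Classical in
/-- `φ[X]_ν`. -/
noncomputable def evalNu (X : Set (LTL Ap)) : LTL Ap → LTL Ap
  | .tt => .tt
  | .ff => .ff
  | .atom a => .atom a
  | .natom a => .natom a
  | .conj φ ψ => .conj (evalNu X φ) (evalNu X ψ)
  | .disj φ ψ => .disj (evalNu X φ) (evalNu X ψ)
  | .next φ => .next (evalNu X φ)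
  | .glob φ => .glob (evalNu X φ)
  | .wUntl φ ψ => .wUntl (evalNu X φ) (evalNu X ψ)
  | .rel φ ψ => .rel (evalNu X φ) (evalNu X ψ)
  | .fut φ => if LTL.fut φ ∈ X then .tt else .ff
  | .untl φ ψ => if LTL.untl φ ψ ∈ X then .wUntl (evalNu X φ) (evalNu X ψ) else .ff
  | .strongRel φ ψ => if LTL.strongRel φ ψ ∈ X then .rel (evalNu X φ) (evalNu X ψ) else .ff

open scoped Classical in
/-- `φ[Y]_μ`. -/
noncomputable def evalMu (Y : Set (LTL Ap)) : LTL Ap → LTL Ap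
  | .tt => .tt
  | .ff => .ff
  | .atom a => .atom a
  | .natom a => .natom a
  | .conj φ ψ => .conj (evalMu Y φ) (evalMu Y ψ)
  | .disj φ ψ => .disj (evalMu Y φ) (evalMu Y ψ)
  | .next φ => .next (evalMu Y φ)
  | .fut φ => .fut (evalMu Y φ)
  | .untl φ ψ => .untl (evalMu Y φ) (evalMu Y ψ)
  | .strongRel φ ψ => .strongRel (evalMu Y φ) (evalMu Y ψ)
  | .glob φ => if LTL.glob φ ∈ Y then .tt else .ff
  | .wUntl φ ψ => if LTL.wUntl φ ψ ∈ Y then .tt else .untl (evalMu Y φ) (evalMu Y ψ)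
  | .rel φ ψ => if LTL.rel φ ψ ∈ Y then .tt else .strongRel (evalMu Y φ) (evalMu Y ψ)

/-- Concatenation `u·w` of a finite word and an infinite word. -/
def wordAppend (u : List (Finset Ap)) (w : ℕ → Finset Ap) : ℕ → Finset Ap :=
  fun i => if h : i < u.length then u.get ⟨i, h⟩ else w (i - u.length)

/-- The smallest set of formulas containing `tt`, `ff` and all elements of `S`
that is closed under conjunction and disjunction. -/
inductive PosBool (S : Set (LTL Ap)) : LTL Ap → Prop
  | tt : PosBool S .tt
  | ff : PosBool S .ff
  | base {ψ : LTL Ap} : ψ ∈ S → PosBool S ψ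
  | conj {φ ψ : LTL Ap} : PosBool S φ → PosBool S ψ → PosBool S (.conj φ ψ)
  | disj {φ ψ : LTL Ap} : PosBool S φ → PosBool S ψ → PosBool S (.disj φ ψ)

/-- `Reach(φ)`: the set of `≡_P`-equivalence classes of the formulas `af(φ,u)`
over all finite words `u`. -/
def Reach (φ : LTL Ap) : Set (Set (LTL Ap)) :=
  {C | ∃ u : List (Finset Ap), C = {ψ | propEquiv ψ (af φ u)}}

/-- The fragment `μLTL`: only `tt`, `ff`, literals, `∧`, `∨`, `X`, `F`, `U`, `M`. -/
def inMuLTL : LTL Ap → Prop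
  | .tt => True
  | .ff => True
  | .atom _ => True
  | .natom _ => True
  | .conj φ ψ => inMuLTL φ ∧ inMuLTL ψ
  | .disj φ ψ => inMuLTL φ ∧ inMuLTL ψ
  | .next φ => inMuLTL φ
  | .fut φ => inMuLTL φ
  | .untl φ ψ => inMuLTL φ ∧ inMuLTL ψ
  | .strongRel φ ψ => inMuLTL φ ∧ inMuLTL ψ
  | .glob _ => False
  | .wUntl _ _ => False
  | .rel _ _ => False

/-- The fragment `νLTL`: only `tt`, `ff`, literals, `∧`, `∨`, `X`, `G`, `W`, `R`. -/
def inNuLTL : LTL Ap → Prop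
  | .tt => True
  | .ff => True
  | .atom _ => True
  | .natom _ => True
  | .conj φ ψ => inNuLTL φ ∧ inNuLTL ψ
  | .disj φ ψ => inNuLTL φ ∧ inNuLTL ψ
  | .next φ => inNuLTL φ
  | .glob φ => inNuLTL φ
  | .wUntl φ ψ => inNuLTL φ ∧ inNuLTL ψ
  | .rel φ ψ => inNuLTL φ ∧ inNuLTL ψ
  | .fut _ => False
  | .untl _ _ => False
  | .strongRel _ _ => False

lemma suffix_suffix (w : ℕ → Finset Ap) (i k : ℕ) :
    suffix (suffix w i) k = suffix w (i + k) := by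
  funext j; simp [suffix, add_assoc]

lemma suffix_zero (w : ℕ → Finset Ap) : suffix w 0 = w := by
  funext j; simp [suffix]

lemma mem_subf_self (ψ : LTL Ap) : ψ ∈ subf ψ := by
  cases ψ <;> simp [subf]

lemma key_lemma (w : ℕ → Finset Ap) (Y : Set (LTL Ap))
    (Hin : ∀ χ ∈ Y, ∀ k, Sat (suffix w k) χ) :
    ∀ ψ : LTL Ap,
      (∀ χ ∈ subf ψ, isNu χ → (∃ i, ∀ k, Sat (suffix w (i + k)) χ) → χ ∈ Y) →
      ∀ i, Sat (suffix w i) ψ ↔ Sat (suffix w i) (evalMu Y ψ) := by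
  intro ψ
  induction ψ with
  | tt => intro _ i; simp [evalMu, Sat]
  | ff => intro _ i; simp [evalMu, Sat]
  | atom a => intro _ i; simp [evalMu]
  | natom a => intro _ i; simp [evalMu]
  | conj a b iha ihb =>
      intro H i
      have Ha := iha (fun χ hχ => H χ (by simp only [subf, Set.mem_insert_iff, Set.mem_union]; tauto))
      have Hb := ihb (fun χ hχ => H χ (by simp only [subf, Set.mem_insert_iff, Set.mem_union]; tauto))
      simp only [evalMu, Sat]
      exact and_congr (Ha i) (Hb i)
  | disj a b iha ihb =>
      intro H i
      have Ha := iha (fun χ hχ => H χ (by simp only [subf, Set.mem_insert_iff, Set.mem_union]; tauto))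
      have Hb := ihb (fun χ hχ => H χ (by simp only [subf, Set.mem_insert_iff, Set.mem_union]; tauto))
      simp only [evalMu, Sat]
      exact or_congr (Ha i) (Hb i)
  | next a iha =>
      intro H i
      have Ha := iha (fun χ hχ => H χ (by simp only [subf, Set.mem_insert_iff]; tauto))
      simp only [evalMu, Sat, suffix_suffix]
      exact Ha (i + 1)
  | fut a iha =>
      intro H i
      have Ha := iha (fun χ hχ => H χ (by simp only [subf, Set.mem_insert_iff]; tauto))
      simp only [evalMu, Sat, suffix_suffix]
      exact exists_congr fun k => Ha (i + k)
  | untl a b iha ihb =>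
      intro H i
      have Ha := iha (fun χ hχ => H χ (by simp only [subf, Set.mem_insert_iff, Set.mem_union]; tauto))
      have Hb := ihb (fun χ hχ => H χ (by simp only [subf, Set.mem_insert_iff, Set.mem_union]; tauto))
      simp only [evalMu, Sat, suffix_suffix]
      exact exists_congr fun k => and_congr (Hb (i + k))
        (forall_congr' fun j => imp_congr_right fun _ => Ha (i + j))
  | strongRel a b iha ihb =>
      intro H i
      have Ha := iha (fun χ hχ => H χ (by simp only [subf, Set.mem_insert_iff, Set.mem_union]; tauto))
      have Hb := ihb (fun χ hχ => H χ (by simp only [subf, Set.mem_insert_iff, Set.mem_union]; tauto))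
      simp only [evalMu, Sat, suffix_suffix]
      exact exists_congr fun k => and_congr (Ha (i + k))
        (forall_congr' fun j => imp_congr_right fun _ => Hb (i + j))
  | glob a iha =>
      intro H i
      by_cases hm : LTL.glob a ∈ Y
      · simp only [evalMu, if_pos hm, Sat]
        exact iff_of_true (Hin _ hm i) trivial
      · simp only [evalMu, if_neg hm, Sat, suffix_suffix]
        refine iff_of_false (fun h => hm ?_) not_false
        refine H _ (mem_subf_self _) trivial ⟨i, fun k => ?_⟩
        simp only [Sat, suffix_suffix]
        intro m
        have := h (k + m)
        rwa [show i + (k + m) = i + k + m by omega] at this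
  | wUntl a b iha ihb =>
      intro H i
      by_cases hm : LTL.wUntl a b ∈ Y
      · simp only [evalMu, if_pos hm, Sat]
        exact iff_of_true (Hin _ hm i) trivial
      · have Ha := iha (fun χ hχ => H χ (by simp only [subf, Set.mem_insert_iff, Set.mem_union]; tauto))
        have Hb := ihb (fun χ hχ => H χ (by simp only [subf, Set.mem_insert_iff, Set.mem_union]; tauto))
        simp only [evalMu, if_neg hm, Sat, suffix_suffix]
        constructor
        · rintro (hG | ⟨k, hk, hj⟩)
          · exfalso
            apply hm
            refine H _ (mem_subf_self _) trivial ⟨i, fun k => ?_⟩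
            simp only [Sat, suffix_suffix]
            left
            intro m
            have := hG (k + m)
            rwa [show i + (k + m) = i + k + m by omega] at this
          · exact ⟨k, (Hb (i + k)).1 hk, fun j hj' => (Ha (i + j)).1 (hj j hj')⟩
        · rintro ⟨k, hk, hj⟩
          exact Or.inr ⟨k, (Hb (i + k)).2 hk, fun j hj' => (Ha (i + j)).2 (hj j hj')⟩
  | rel a b iha ihb =>
      intro H i
      by_cases hm : LTL.rel a b ∈ Y
      · simp only [evalMu, if_pos hm, Sat]
        exact iff_of_true (Hin _ hm i) trivial
      · have Ha := iha (fun χ hχ => H χ (by simp only [subf, Set.mem_insert_iff, Set.mem_union]; tauto))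
        have Hb := ihb (fun χ hχ => H χ (by simp only [subf, Set.mem_insert_iff, Set.mem_union]; tauto))
        simp only [evalMu, if_neg hm, Sat, suffix_suffix]
        constructor
        · rintro (hG | ⟨k, hk, hj⟩)
          · exfalso
            apply hm
            refine H _ (mem_subf_self _) trivial ⟨i, fun k => ?_⟩
            simp only [Sat, suffix_suffix]
            left
            intro m
            have := hG (k + m)
            rwa [show i + (k + m) = i + k + m by omega] at this
          · exact ⟨k, (Ha (i + k)).1 hk, fun j hj' => (Hb (i + j)).1 (hj j hj')⟩
        · rintro ⟨k, hk, hj⟩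
          exact Or.inr ⟨k, (Ha (i + k)).2 hk, fun j hj' => (Hb (i + j)).2 (hj j hj')⟩

/-- if `FG_w = Y = G_w` then `w ⊨ φ` iff `w ⊨ φ[Y]_μ`. -/
theorem stmt15 {Ap : Type} [DecidableEq Ap] [Fintype Ap]
    (φ : LTL Ap) (w : ℕ → Finset Ap) (Y : Set (LTL Ap))
    (hY : Y ⊆ nuSet φ) (h1 : FGSet φ w = Y) (h2 : Y = GSet φ w) :
    Sat w φ ↔ Sat w (evalMu Y φ) := by
  have Hin : ∀ χ ∈ Y, ∀ k, Sat (suffix w k) χ := by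
    intro χ hχ k
    have : χ ∈ GSet φ w := h2 ▸ hχ
    exact this.2 k
  have Hout : ∀ χ ∈ subf φ, isNu χ → (∃ i, ∀ k, Sat (suffix w (i + k)) χ) → χ ∈ Y := by
    intro χ hχ hnu ⟨i, hi⟩
    have : χ ∈ FGSet φ w := ⟨⟨hχ, hnu⟩, ⟨i, fun k => by rw [suffix_suffix]; exact hi k⟩⟩
    exact h1 ▸ this
  have := key_lemma w Y Hin φ Hout 0
  rwa [suffix_zero] at this
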